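/- arXiv:2404.14255 — 4 statements merged into one kernel-verified Lean document; each statement's English description precedes it below -/
import Mathlib

section
/- Let G be an n-dimensional crystallographic group and H a finitely generated residually finite group with isomorphic profinite completions Ĝ ≅ Ĥ. Then G is torsion free if and only if H is torsion free. -/
/-- Two groups have the same set of isomorphism classes of finite quotients. -/
def SameFiniteQuotients (G H : Type*) [Group G] [Group H] : Prop :=
  ∀ (Q : Type) [Group Q] [Finite Q],
    (∃ f : G →* Q, Function.Surjective f) ↔ (∃ f : H →* Q, Function.Surjective f)

/-- A group is residually finite if every nontrivial element survives in some finite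
quotient. -/
def ResiduallyFinite (G : Type*) [Group G] : Prop :=
  ∀ g : G, g ≠ 1 → ∃ N : Subgroup G, N.Normal ∧ N.FiniteIndex ∧ g ∉ N

/-- A group has no nontrivial finite normal subgroup. -/
def NoFiniteNormalSubgroup (G : Type*) [Group G] : Prop :=
  ∀ N : Subgroup G, N.Normal → Finite N → N = ⊥

/-- `G` is virtually free abelian of rank `n`, witnessed by a normal finite-index
subgroup isomorphic to `ℤⁿ`. -/
def HasNormalZnFiniteIndex (n : ℕ) (G : Type*) [Group G] : Prop :=
  ∃ N : Subgroup G, N.Normal ∧ N.FiniteIndex ∧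
    Nonempty (N ≃* Multiplicative (Fin n → ℤ))

/-- `G` is an `n`-dimensional crystallographic group (algebraic characterisation:
virtually `ℤⁿ` with no nontrivial finite normal subgroup). -/
def IsCrystallographic (n : ℕ) (G : Type*) [Group G] : Prop :=
  HasNormalZnFiniteIndex n G ∧ NoFiniteNormalSubgroup G

/-- `G` is an `n`-dimensional crystallographic group with point group (isomorphic to) `P`. -/
def IsCrystallographicWithPointGroup (n : ℕ) (G : Type*) [Group G]
    (P : Type*) [Group P] : Prop :=
  NoFiniteNormalSubgroup G ∧ Finite P ∧
    ∃ (N : Subgroup G) (_ : N.Normal), N.FiniteIndex ∧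
      Nonempty (N ≃* Multiplicative (Fin n → ℤ)) ∧ Nonempty ((G ⧸ N) ≃* P)

/-- `G` is a symmorphic `n`-dimensional crystallographic group: the short exact sequence
`1 → ℤⁿ → G → P → 1` splits. -/
def IsSymmorphic (n : ℕ) (G : Type*) [Group G] : Prop :=
  ∃ (N : Subgroup G) (_ : N.Normal), N.FiniteIndex ∧
    Nonempty (N ≃* Multiplicative (Fin n → ℤ)) ∧
    ∃ s : (G ⧸ N) →* G, (QuotientGroup.mk' N).comp s = MonoidHom.id (G ⧸ N)

/-- A group is just infinite if it is infinite but all of its proper quotients are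
finite, i.e. every nontrivial normal subgroup has finite index. -/
def JustInfinite (G : Type*) [Group G] : Prop :=
  Infinite G ∧ ∀ N : Subgroup G, N.Normal → N ≠ ⊥ → N.FiniteIndex

/-- `G` is virtually free abelian: some finite-index subgroup is isomorphic to `ℤⁿ`
for some `n`. -/
def VirtuallyFreeAbelian (G : Type*) [Group G] : Prop :=
  ∃ (n : ℕ) (N : Subgroup G), N.FiniteIndex ∧ Nonempty (N ≃* Multiplicative (Fin n → ℤ))

/-- The set of finite-index normal subgroups of `G`. -/
abbrev NormalFiniteIndexSubgroup (G : Type*) [Group G] : Type _ :=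
  {N : Subgroup G // N.Normal ∧ N.FiniteIndex}

instance (G : Type*) [Group G] (N : NormalFiniteIndexSubgroup G) : N.val.Normal := N.prop.1
instance (G : Type*) [Group G] (N : NormalFiniteIndexSubgroup G) : N.val.FiniteIndex := N.prop.2
instance (G : Type*) [Group G] (N : NormalFiniteIndexSubgroup G) :
    TopologicalSpace (G ⧸ N.val) := ⊥
instance (G : Type*) [Group G] (N : NormalFiniteIndexSubgroup G) :
    DiscreteTopology (G ⧸ N.val) := ⟨rfl⟩
instance (G : Type*) [Group G] (N : NormalFiniteIndexSubgroup G) :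
    IsTopologicalGroup (G ⧸ N.val) := ⟨⟩

/-- The product of all finite quotients of `G`, with the product topology of the
discrete topologies. -/
abbrev ProfiniteAmbient (G : Type*) [Group G] : Type _ :=
  ∀ N : NormalFiniteIndexSubgroup G, G ⧸ N.val

/-- The canonical map `G → ∏ G/N`. -/
def profiniteMap (G : Type*) [Group G] : G →* ProfiniteAmbient G :=
  Pi.monoidHom fun N => QuotientGroup.mk' N.val

/-- The profinite completion of `G`, as the closure of the image of `G` in `∏ G/N`. -/
def profiniteCompletionSubgroup (G : Type*) [Group G] : Subgroup (ProfiniteAmbient G) :=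
  (profiniteMap G).range.topologicalClosure

/-- The profinite completion of `G`. -/
abbrev ProfiniteCompletion (G : Type*) [Group G] : Type _ :=
  ↥(profiniteCompletionSubgroup G)

/-- The canonical homomorphism `ι : G → Ĝ`. -/
def profiniteIota (G : Type*) [Group G] : G →* ProfiniteCompletion G :=
  (profiniteMap G).codRestrict _ fun g =>
    Subgroup.le_topologicalClosure _ ⟨g, rfl⟩

/-- A monoid is torsion-free if no element except `1` has finite order
(the definition `Monoid.IsTorsionFree` of the older Mathlib, since removed). -/
def Monoid.IsTorsionFree (G : Type*) [Monoid G] : Prop :=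
  ∀ g : G, g ≠ 1 → ¬IsOfFinOrder g

/-!
Let `K` be a group with a normal finite-index finitely generated abelian subgroup `N`. Then `K` is
residually finite, and if `K` is torsion-free then so is `K̂`. Indeed, let `x ∈ K̂` with
`x ^ p = 1`, lying over `gN ∈ K/N`. Since `(g v) ^ p = g ^ p · ∏_{i<p} g⁻ⁱ v gⁱ` for `v ∈ N`, the
coordinates of `x` modulo the subgroups of `m`-th powers of `N` solve `(g v) ^ p = 1` modulo
`N ^ m` for every `m`. In a finitely generated abelian group only `1` is divisible by every `m`, so
the equation is solvable in `N`, and torsion-freeness of `K` forces `g ∈ N`. For `x` over the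
trivial coset, uniqueness of `p`-th roots in `N` makes every coordinate of `x` trivial.

`G` is such a group with `N ≅ ℤⁿ`, and so is `H`: the preimage under `H ↪ Ĥ ≅ Ĝ` of the abelian
finite-index subgroup `ker (Ĝ → G/N)` is abelian of finite index. As residually finite groups embed
in their completions, torsion-freeness passes from either group through `Ĝ ≅ Ĥ` to the other.
-/

namespace CommGroup

variable {A : Type*} [CommGroup A] [Group.FG A]

theorem eq_one_of_forall_exists_pow_eq {a : A} (h : ∀ m : ℕ, 0 < m → ∃ b : A, b ^ m = a) :
    a = 1 := by
  obtain ⟨k, ι, _, p, hp, e, ⟨F⟩⟩ := AddCommGroup.equiv_free_prod_directSum_zmod (Additive A)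
  have hdiv (m : ℕ) (hm : 0 < m) : ∃ r, F (.ofMul a) = m • r := by
    obtain ⟨b, rfl⟩ := h m hm
    exact ⟨F (.ofMul b), by rw [← map_nsmul]; rfl⟩
  suffices F (.ofMul a) = 0 by simpa using this
  refine Prod.ext (Finsupp.ext fun j => ?_) (DFinsupp.ext fun i => ?_)
  · have hdvd (m : ℕ) (hm : 0 < m) : (m : ℤ) ∣ (F (.ofMul a)).1 j := by
      obtain ⟨r, hr⟩ := hdiv m hm
      exact ⟨r.1 j, by simp [hr]⟩
    refine Int.eq_zero_of_dvd_of_natAbs_lt_natAbs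
      (hdvd (((F (.ofMul a)).1 j).natAbs + 1) (Nat.succ_pos _)) ?_
    rw [Int.natAbs_natCast]
    omega
  · obtain ⟨r, hr⟩ := hdiv (p i ^ e i) (pow_pos (hp i).pos _)
    rw [hr, Prod.smul_snd, DFinsupp.smul_apply, nsmul_eq_mul]
    simp

theorem mem_range_of_forall_exists_mul_pow_eq {B : Type*} [Group B] (f : B →* A) {c : A}
    (h : ∀ m : ℕ, 0 < m → ∃ v y, f v * y ^ m = c) : c ∈ f.range := by
  rw [← QuotientGroup.eq_one_iff]
  refine eq_one_of_forall_exists_pow_eq fun m hm => ?_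
  obtain ⟨v, y, rfl⟩ := h m hm
  refine ⟨y, ?_⟩
  rw [QuotientGroup.mk_mul, (QuotientGroup.eq_one_iff _).mpr (MonoidHom.mem_range.mpr ⟨v, rfl⟩),
    one_mul, QuotientGroup.mk_pow]

instance finiteIndex_range_powMonoidHom (m : ℕ) [NeZero m] :
    (powMonoidHom m : A →* A).range.FiniteIndex := by
  have : IsMulTorsion (A ⧸ (powMonoidHom m : A →* A).range) := by
    rintro ⟨a⟩
    refine isOfFinOrder_iff_pow_eq_one.mpr ⟨m, NeZero.pos m, ?_⟩
    exact (QuotientGroup.eq_one_iff _).mpr (MonoidHom.mem_range.mpr ⟨a, rfl⟩)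
  have := finite_of_fg_isMulTorsion _ this
  exact Subgroup.finiteIndex_of_finite_quotient

instance residuallyFinite : Group.ResiduallyFinite A := by
  refine Group.residuallyFinite_iff_exists_finiteIndex.mpr fun a ha => ?_
  obtain ⟨m, hm, hma⟩ : ∃ m : ℕ, 0 < m ∧ ∀ b : A, b ^ m ≠ a := by
    by_contra! h
    exact ha (eq_one_of_forall_exists_pow_eq h)
  have : NeZero m := ⟨hm.ne'⟩
  refine ⟨(powMonoidHom m : A →* A).range, inferInstance, fun hmem => ?_⟩
  obtain ⟨b, hb⟩ := MonoidHom.mem_range.mp hmem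
  exact hma b hb

end CommGroup

namespace Subgroup

variable {K K' : Type*} [Group K] [Group K']

instance finiteIndex_comap (U : Subgroup K') [U.FiniteIndex] (f : K →* K') :
    (U.comap f).FiniteIndex :=
  ⟨by rw [index_comap]; exact FiniteIndex.index_ne_zero⟩

instance finiteIndex_map_subtype {N : Subgroup K} [N.FiniteIndex] (L : Subgroup N)
    [L.FiniteIndex] : (L.map N.subtype).FiniteIndex :=
  ⟨by rw [index_map_subtype]; exact mul_ne_zero FiniteIndex.index_ne_zero FiniteIndex.index_ne_zero⟩

end Subgroup

theorem residuallyFinite_iff_group_residuallyFinite {K : Type*} [Group K] :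
    ResiduallyFinite K ↔ Group.ResiduallyFinite K := by
  rw [Group.residuallyFinite_iff_exists_finiteIndexNormalSubgroup]
  refine forall₂_congr fun g _ => ⟨fun ⟨N, _, _, hgN⟩ => ⟨{ toSubgroup := N }, hgN⟩,
    fun ⟨N, hgN⟩ => ⟨N, inferInstance, inferInstance, hgN⟩⟩

theorem Group.residuallyFinite_of_finiteIndex {K : Type*} [Group K] (N : Subgroup K)
    [N.FiniteIndex] [Group.ResiduallyFinite N] : Group.ResiduallyFinite K := by
  refine Group.residuallyFinite_iff_exists_finiteIndex.mpr fun g hg => ?_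
  by_cases hgN : g ∈ N
  · obtain ⟨L, _, hgL⟩ := Group.residuallyFinite_iff_exists_finiteIndex.mp ‹_› (⟨g, hgN⟩ : N)
      (by simpa using hg)
    refine ⟨L.map N.subtype, inferInstance, ?_⟩
    rintro ⟨y, hy, hyg⟩
    exact hgL (by rwa [show (⟨g, hgN⟩ : N) = y from Subtype.ext hyg.symm])
  · exact ⟨N, inferInstance, hgN⟩

theorem Monoid.IsTorsionFree.of_injective {M M' F : Type*} [Monoid M] [Monoid M'] [FunLike F M M']
    [MonoidHomClass F M M'] {f : F} (hf : Function.Injective f) (h : Monoid.IsTorsionFree M') :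
    Monoid.IsTorsionFree M :=
  fun a ha hfin => h (f a) ((map_ne_one_iff f hf).mpr ha) ((f : M →* M').isOfFinOrder hfin)

theorem Monoid.IsTorsionFree.eq_of_pow_eq_pow {K : Type*} [Group K] (hK : Monoid.IsTorsionFree K)
    {a b : K} (hab : Commute a b) {p : ℕ} (hp : 0 < p) (h : a ^ p = b ^ p) : a = b := by
  by_contra hne
  refine hK (a * b⁻¹) (mul_inv_eq_one.not.mpr hne) (isOfFinOrder_iff_pow_eq_one.mpr ⟨p, hp, ?_⟩)
  rw [hab.inv_right.mul_pow, h, inv_pow, mul_inv_cancel]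

section NormMap

open scoped IsMulCommutative

variable {K : Type*} [Group K] (N : Subgroup K) [N.Normal] [IsMulCommutative N]

def conjNorm (g : K) (k : ℕ) : N →* N :=
  ∏ i ∈ Finset.range k, (MulAut.conjNormal (g ^ i)⁻¹).toMonoidHom

theorem mul_pow_eq_pow_mul_conjNorm (g : K) (v : N) (k : ℕ) :
    (g * v) ^ k = g ^ k * conjNorm N g k v := by
  induction k with
  | zero => simp [conjNorm]
  | succ k ih =>
    rw [pow_succ', ih, conjNorm, conjNorm, Finset.prod_range_succ, MonoidHom.mul_apply,
      mul_comm (_ : N), Subgroup.coe_mul, MulEquiv.toMonoidHom_eq_coe, MonoidHom.coe_coe,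
      MulAut.conjNormal_apply]
    group

end NormMap

section PowCore

open scoped IsMulCommutative

variable {K : Type*} [Group K] (N : NormalFiniteIndexSubgroup K) [IsMulCommutative N.val]
  [Group.FG N.val]

def powCore (m : ℕ) [NeZero m] : NormalFiniteIndexSubgroup K :=
  ⟨((powMonoidHom m : N.val →* N.val).range.map N.val.subtype).normalCore, inferInstance,
    inferInstance⟩

variable (m : ℕ) [NeZero m]

theorem powCore_le : (powCore N m).val ≤ N.val :=
  (Subgroup.normalCore_le _).trans (Subgroup.map_subtype_le _)

theorem exists_pow_eq_of_mem_powCore {u : K} (hu : u ∈ (powCore N m).val) :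
    ∃ y ∈ N.val, y ^ m = u := by
  obtain ⟨_, ⟨y, rfl⟩, rfl⟩ := Subgroup.normalCore_le _ hu
  exact ⟨y, y.2, rfl⟩

theorem powCore_le_of_index_dvd (M : NormalFiniteIndexSubgroup K) (h : M.val.index ∣ m) :
    (powCore N m).val ≤ M.val := by
  intro u hu
  obtain ⟨y, -, rfl⟩ := exists_pow_eq_of_mem_powCore N m hu
  obtain ⟨k, rfl⟩ := h
  rw [pow_mul]
  exact pow_mem (M.val.pow_index_mem y) k

end PowCore

namespace ProfiniteCompletion

variable {K : Type*} [Group K]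

def eval (M : NormalFiniteIndexSubgroup K) : ProfiniteCompletion K →* K ⧸ M.val :=
  (Pi.evalMonoidHom (fun N : NormalFiniteIndexSubgroup K => K ⧸ N.val) M).comp
    (profiniteCompletionSubgroup K).subtype

@[simp]
theorem eval_profiniteIota (M : NormalFiniteIndexSubgroup K) (g : K) :
    eval M (profiniteIota K g) = g :=
  rfl

@[ext]
theorem ext {x y : ProfiniteCompletion K} (h : ∀ M, eval M x = eval M y) : x = y :=
  Subtype.ext (funext h)

theorem eval_eq_of_le {M M' : NormalFiniteIndexSubgroup K} (h : M.val ≤ M'.val)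
    {x : ProfiniteCompletion K} {u : K} (hu : eval M x = u) : eval M' x = u := by
  let π : K ⧸ M.val →* K ⧸ M'.val := QuotientGroup.map _ _ (MonoidHom.id K) h
  have hπ : x.val ∈ {z : ProfiniteAmbient K | π (z M) = z M'} :=
    closure_minimal (by rintro _ ⟨g, rfl⟩; rfl)
      (isClosed_eq (continuous_of_discreteTopology.comp (continuous_apply M))
        (continuous_apply M')) x.2
  rw [← show π (eval M x) = eval M' x from hπ, hu]
  rfl

theorem pow_mem_of_eval_eq {M : NormalFiniteIndexSubgroup K} {x : ProfiniteCompletion K}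
    {p : ℕ} (hx : x ^ p = 1) {u : K} (hu : eval M x = u) : u ^ p ∈ M.val := by
  rw [← QuotientGroup.eq_one_iff, QuotientGroup.mk_pow, ← hu, ← map_pow, hx, map_one]

theorem profiniteIota_injective [Group.ResiduallyFinite K] :
    Function.Injective (profiniteIota K) := by
  refine (injective_iff_map_eq_one _).mpr fun g hg => ?_
  refine Group.eq_one_iff_forall_finiteIndexNormalSubroup g fun M => ?_
  have := congrArg (eval ⟨M, inferInstance, inferInstance⟩) hg
  rwa [eval_profiniteIota, map_one, QuotientGroup.eq_one_iff] at this

theorem isMulCommutative_ker_eval (N : NormalFiniteIndexSubgroup K) [IsMulCommutative N.val] :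
    IsMulCommutative (eval N).ker := by
  refine .of_setLike_mul_comm fun x hx y hy => ext fun M => ?_
  let L : NormalFiniteIndexSubgroup K :=
    ⟨M.val ⊓ N.val, Subgroup.normal_inf_normal _ _, inferInstance⟩
  obtain ⟨a, ha⟩ := QuotientGroup.mk_surjective (eval L x)
  obtain ⟨b, hb⟩ := QuotientGroup.mk_surjective (eval L y)
  have hmem {z : ProfiniteCompletion K} (hz : z ∈ (eval N).ker) {c : K} (hc : eval L z = c) :
      c ∈ N.val := by
    rw [← QuotientGroup.eq_one_iff, ← eval_eq_of_le inf_le_right hc, hz]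
  have hab : a * b = b * a := setLike_mul_comm (hmem hx ha.symm) (hmem hy hb.symm)
  rw [eval_eq_of_le inf_le_left (u := a * b) (by rw [map_mul, ← ha, ← hb]; rfl),
    eval_eq_of_le inf_le_left (u := b * a) (by rw [map_mul, ← ha, ← hb]; rfl), hab]

theorem exists_isMulCommutative [Group.ResiduallyFinite K] (U : Subgroup (ProfiniteCompletion K))
    [U.FiniteIndex] [IsMulCommutative U] :
    ∃ N : NormalFiniteIndexSubgroup K, IsMulCommutative N.val := by
  let A := U.comap (profiniteIota K)
  have : IsMulCommutative A := U.comap_injective_isMulCommutative profiniteIota_injective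
  exact ⟨⟨A.normalCore, inferInstance, inferInstance⟩, .of_setLike_mul_comm fun a ha b hb =>
    setLike_mul_comm (A.normalCore_le ha) (A.normalCore_le hb)⟩

section TorsionFree

open scoped IsMulCommutative

variable (N : NormalFiniteIndexSubgroup K) [IsMulCommutative N.val] [Group.FG N.val]
  {x : ProfiniteCompletion K} {p : ℕ}

theorem eq_one_of_pow_eq_one_of_eval_eq_one (hK : Monoid.IsTorsionFree K) (hp : 0 < p)
    (hx : x ^ p = 1) (hxN : eval N x = 1) : x = 1 := by
  ext M
  -- modulo `N ^ (p * [K : M])` the coordinate `w` of `x` has `w ^ p = (y ^ [K : M]) ^ p`,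
  -- so `w = y ^ [K : M] ∈ M`
  have : NeZero (p * M.val.index) := ⟨mul_ne_zero hp.ne' Subgroup.FiniteIndex.index_ne_zero⟩
  obtain ⟨w, hw⟩ := QuotientGroup.mk_surjective (eval (powCore N (p * M.val.index)) x)
  have hwN : w ∈ N.val := by
    rw [← QuotientGroup.eq_one_iff, ← eval_eq_of_le (powCore_le N _) hw.symm, hxN]
  obtain ⟨y, hyN, hy⟩ := exists_pow_eq_of_mem_powCore N _ (pow_mem_of_eval_eq hx hw.symm)
  have hwy : w = y ^ M.val.index := by
    refine hK.eq_of_pow_eq_pow (Commute.pow_right (setLike_mul_comm hwN hyN) _) hp ?_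
    rw [← hy, ← pow_mul, mul_comm]
  rw [map_one, eval_eq_of_le (powCore_le_of_index_dvd N _ M (dvd_mul_left _ _)) hw.symm,
    QuotientGroup.eq_one_iff, hwy]
  exact M.val.pow_index_mem y

theorem exists_pow_eq_one_of_eval_eq (hx : x ^ p = 1) {g : K} (hg : eval N x = g) :
    ∃ v ∈ N.val, (g * v) ^ p = 1 := by
  let gp : N.val := ⟨g ^ p, pow_mem_of_eval_eq hx hg⟩
  suffices gp⁻¹ ∈ (conjNorm N.val g p).range by
    obtain ⟨w, hw⟩ := this
    refine ⟨w, w.2, ?_⟩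
    rw [mul_pow_eq_pow_mul_conjNorm, hw, Subgroup.coe_inv, mul_inv_cancel]
  refine CommGroup.mem_range_of_forall_exists_mul_pow_eq _ fun m hm => ?_
  have : NeZero m := ⟨hm.ne'⟩
  obtain ⟨u, hu⟩ := QuotientGroup.mk_surjective (eval (powCore N m) x)
  have hv : g⁻¹ * u ∈ N.val := by
    rw [← QuotientGroup.eq, ← hg, eval_eq_of_le (powCore_le N m) hu.symm]
  obtain ⟨y, hyN, hy⟩ := exists_pow_eq_of_mem_powCore N m (pow_mem_of_eval_eq hx hu.symm)
  have hgpv : gp * conjNorm N.val g p ⟨_, hv⟩ = ⟨y, hyN⟩ ^ m := by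
    ext
    rw [Subgroup.coe_mul, ← mul_pow_eq_pow_mul_conjNorm, mul_inv_cancel_left, ← hy]
    rfl
  refine ⟨⟨_, hv⟩, ⟨y, hyN⟩⁻¹, ?_⟩
  rw [inv_pow, ← hgpv, mul_inv_rev, mul_inv_cancel_left]

end TorsionFree

theorem isTorsionFree (N : NormalFiniteIndexSubgroup K) [IsMulCommutative N.val] [Group.FG N.val]
    (hK : Monoid.IsTorsionFree K) : Monoid.IsTorsionFree (ProfiniteCompletion K) := by
  intro x hx hfin
  obtain ⟨p, hp, hxp⟩ := isOfFinOrder_iff_pow_eq_one.mp hfin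
  obtain ⟨g, hg⟩ := QuotientGroup.mk_surjective (eval N x)
  obtain ⟨v, hvN, hgv⟩ := exists_pow_eq_one_of_eval_eq N hxp hg.symm
  have hgN : g ∈ N.val := by
    by_contra hgN
    refine hK (g * v) (fun h => hgN ?_) (isOfFinOrder_iff_pow_eq_one.mpr ⟨p, hp, hgv⟩)
    rw [← mul_inv_cancel_right g v, h, one_mul]
    exact inv_mem hvN
  exact hx (eq_one_of_pow_eq_one_of_eval_eq_one N hK hp hxp
    (by rw [← hg, QuotientGroup.eq_one_iff]; exact hgN))

end ProfiniteCompletion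

/-- If `G` is an `n`-dimensional crystallographic group and `H` is a finitely generated
residually finite group with `Ĝ ≅ Ĥ`, then `G` is torsion free iff `H` is torsion free. -/
theorem torsion_free_profinite_invariant
    (n : ℕ) (G : Type*) [Group G] (hG : IsCrystallographic n G)
    (H : Type*) [Group H] (hHfg : Group.FG H) (hHrf : ResiduallyFinite H)
    (hiso : Nonempty (ProfiniteCompletion G ≃* ProfiniteCompletion H)) :
    Monoid.IsTorsionFree G ↔ Monoid.IsTorsionFree H := by
  obtain ⟨⟨N₀, hN₀, hN₀fi, ⟨e⟩⟩, -⟩ := hG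
  obtain ⟨ψ⟩ := hiso
  let N : NormalFiniteIndexSubgroup G := ⟨N₀, hN₀, hN₀fi⟩
  have : IsMulCommutative N.val :=
    .of_comm fun a b => e.injective (by rw [map_mul, map_mul, mul_comm])
  have : Group.FG N.val := Group.fg_of_surjective (f := e.symm.toMonoidHom) e.symm.surjective
  have : Group.ResiduallyFinite G :=
    open scoped IsMulCommutative in Group.residuallyFinite_of_finiteIndex N.val
  have : Group.ResiduallyFinite H := residuallyFinite_iff_group_residuallyFinite.mp hHrf
  constructor
  · intro hGtf
    exact ((ProfiniteCompletion.isTorsionFree N hGtf).of_injective ψ.symm.injective).of_injective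
      ProfiniteCompletion.profiniteIota_injective
  · intro hHtf
    have := ProfiniteCompletion.isMulCommutative_ker_eval N
    have := (ProfiniteCompletion.eval N).ker.comap_injective_isMulCommutative
      (f := ψ.symm.toMonoidHom) ψ.symm.injective
    obtain ⟨B, _⟩ := ProfiniteCompletion.exists_isMulCommutative
      ((ProfiniteCompletion.eval N).ker.comap ψ.symm.toMonoidHom)
    exact ((ProfiniteCompletion.isTorsionFree B hHtf).of_injective ψ.injective).of_injective
      ProfiniteCompletion.profiniteIota_injective
end

section
/- Let G be a virtually free abelian group of rank n ≥ 1. Then G is isomorphic to an n-dimensional crystallographic group (a discrete, cocompact subgroup of the isometry group of Euclidean space ℝⁿ) if and only if G has no nontrivial finite normal subgroup. -/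
/-!
If `G` is crystallographic and `N` is a finite normal subgroup, the fixed-point set of `N` is an
affine subspace, nonempty because it contains the centroid of an `N`-orbit, and preserved by `G`.
The distance to it is a `G`-invariant continuous function, hence bounded by cocompactness; since
the distance to a proper affine subspace is unbounded, `N` fixes everything.

Conversely, pass to a normal subgroup `L ≅ ℤⁿ` of finite index. Conjugation lets `G` act linearly
on `ℝⁿ ⊇ ℤⁿ` through the finite group `G ⧸ L`, orthogonally after a change of basis (average the
Gram matrix). Averaging over `G ⧸ L` also extends the translations by `L` to a cocycle on `G`. The
resulting affine isometric action is discrete and cocompact because `L` acts by a lattice of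
translations, and its kernel meets `L` trivially, so it is a finite normal subgroup, hence trivial.
-/

/-- The group of isometries of a metric space acts on the space. -/
instance isometryEquivMulAction (X : Type*) [MetricSpace X] : MulAction (X ≃ᵢ X) X where
  smul f x := f x
  one_smul _ := rfl
  mul_smul _ _ _ := rfl

/-- `G` is isomorphic to an `n`-dimensional crystallographic group: a discrete (i.e. acting
properly discontinuously) cocompact subgroup of the isometry group of Euclidean `n`-space. -/
def IsCrystallographicGeom (n : ℕ) (G : Type*) [Group G] : Prop :=
  ∃ Γ : Subgroup (EuclideanSpace ℝ (Fin n) ≃ᵢ EuclideanSpace ℝ (Fin n)),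
    Nonempty (G ≃* Γ) ∧
    ProperlyDiscontinuousSMul Γ (EuclideanSpace ℝ (Fin n)) ∧
    CompactSpace (Quotient (MulAction.orbitRel Γ (EuclideanSpace ℝ (Fin n))))

open Matrix Metric

section FixedPoints

variable {E : Type*} [NormedAddCommGroup E] [NormedSpace ℝ E]

theorem IsometryEquiv.exists_forall_apply_eq_self_of_finite {H : Type*} [Group H] [Finite H]
    (ρ : H →* (E ≃ᵢ E)) : ∃ x, ∀ h, ρ h x = x := by
  classical
  have := Fintype.ofFinite H
  refine ⟨Finset.univ.centroid ℝ (fun h => ρ h 0), fun g => ?_⟩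
  have hmap := Finset.univ.map_affineCombination (fun h => ρ h 0) _
    (Finset.univ.sum_centroidWeights_eq_one_of_card_ne_zero ℝ
      (Finset.card_univ.trans_ne Fintype.card_ne_zero))
    (ρ g).toRealAffineIsometryEquiv.toAffineMap
  rw [← Finset.centroid_def, ← Finset.centroid_def] at hmap
  have hperm : (ρ g).toRealAffineIsometryEquiv.toAffineMap ∘ (fun h => ρ h 0) =
      (fun h => ρ h 0) ∘ (Equiv.mulLeft g).toEmbedding := by
    ext h; simp [map_mul]
  rwa [hperm, ← Finset.centroid_map, Finset.map_univ_equiv] at hmap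

theorem Metric.mul_infDist_le_infDist_lineMap {A : Set E} {a : E} (ha : a ∈ A)
    (hA : ∀ y ∈ A, ∀ t : ℝ, AffineMap.lineMap a y t ∈ A) (z : E) {t : ℝ} (ht : 0 < t) :
    t * infDist z A ≤ infDist (AffineMap.lineMap a z t) A := by
  refine (le_infDist ⟨a, ha⟩).2 fun y hy => ?_
  have hdiff : AffineMap.lineMap a z t - y = t • (z - AffineMap.lineMap a y t⁻¹) := by
    simp only [AffineMap.lineMap_apply_module', smul_sub, smul_add, smul_smul,
      mul_inv_cancel₀ ht.ne', one_smul]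
    abel
  rw [dist_eq_norm, hdiff, norm_smul, Real.norm_of_nonneg ht.le, ← dist_eq_norm]
  exact mul_le_mul_of_nonneg_left (infDist_le_dist_of_mem (hA y hy t⁻¹)) ht.le

theorem MulAction.bddAbove_range_of_compactSpace_quotient {Γ X : Type*} [Group Γ] [MulAction Γ X]
    [TopologicalSpace X] [CompactSpace (Quotient (MulAction.orbitRel Γ X))] {f : X → ℝ}
    (hf : Continuous f) (hinv : ∀ (γ : Γ) x, f (γ • x) = f x) : BddAbove (Set.range f) := by
  let f' : Quotient (MulAction.orbitRel Γ X) → ℝ :=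
    Quotient.lift (s := MulAction.orbitRel Γ X) f fun _ _ ⟨γ, hγ⟩ => hγ ▸ hinv γ _
  have hrange : Set.range f' = Set.range f :=
    Set.range_quotient_lift (s := MulAction.orbitRel Γ X) _
  exact hrange ▸ (isCompact_range (hf.quotient_lift _)).bddAbove

theorem Subgroup.eq_bot_of_finite_of_compactSpace_quotient {Γ : Subgroup (E ≃ᵢ E)}
    [CompactSpace (Quotient (MulAction.orbitRel Γ E))]
    (N : Subgroup Γ) [N.Normal] [Finite N] : N = ⊥ := by
  let ρ : N →* (E ≃ᵢ E) := Γ.subtype.comp N.subtype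
  let F : Set E := {x | ∀ n, ρ n x = x}
  obtain ⟨a, ha⟩ := IsometryEquiv.exists_forall_apply_eq_self_of_finite ρ
  have hFclosed : IsClosed F := by
    simp only [F, Set.ofPred_forall]
    exact isClosed_iInter fun n => isClosed_eq (ρ n).continuous continuous_id
  have hline (y : E) (hy : y ∈ F) (t : ℝ) : AffineMap.lineMap a y t ∈ F := fun n => by
    have := (ρ n).toRealAffineIsometryEquiv.toAffineMap.apply_lineMap a y t
    simp only [AffineEquiv.coe_toAffineMap, AffineIsometryEquiv.coe_toAffineEquiv,
      IsometryEquiv.coeFn_toRealAffineIsometryEquiv] at this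
    rw [this, ha n, hy n]
  have hsmul (γ : Γ) {x : E} (hx : x ∈ F) : γ • x ∈ F := fun n => by
    have hconj : γ⁻¹ * n * γ ∈ N := by simpa using ‹N.Normal›.conj_mem n n.2 γ⁻¹
    have hfix : ((γ⁻¹ * n * γ : Γ) : E ≃ᵢ E) x = x := hx ⟨_, hconj⟩
    change ((n : Γ) : E ≃ᵢ E) ((γ : E ≃ᵢ E) x) = (γ : E ≃ᵢ E) x
    conv_rhs => rw [← hfix]
    simp [IsometryEquiv.mul_apply]
  have hinv (γ : Γ) (x : E) : infDist (γ • x) F = infDist x F := by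
    have himage : (γ : E ≃ᵢ E) '' F = F :=
      (Set.image_subset_iff.2 fun _ hx => Set.mem_preimage.2 (hsmul γ hx)).antisymm
        fun x hx => ⟨γ⁻¹ • x, hsmul γ⁻¹ hx, smul_inv_smul γ x⟩
    conv_lhs => rw [← himage]
    exact infDist_image (γ : E ≃ᵢ E).isometry
  obtain ⟨M, hM⟩ := MulAction.bddAbove_range_of_compactSpace_quotient (continuous_infDist_pt F) hinv
  by_contra hN
  obtain ⟨n, hn⟩ := (Subgroup.ne_bot_iff_exists_ne_one).1 hN
  obtain ⟨z, hz⟩ : ∃ z, ρ n z ≠ z := by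
    by_contra! h
    exact hn (Subtype.ext (Subtype.ext (IsometryEquiv.ext h)))
  have hzF : 0 < infDist z F := (hFclosed.notMem_iff_infDist_pos ⟨a, ha⟩).1 fun h => hz (h n)
  have hM1 : 0 < M + 1 := by linarith [hM ⟨z, rfl⟩]
  have hfar := mul_infDist_le_infDist_lineMap (A := F) ha hline z (div_pos hM1 hzF)
  rw [div_mul_cancel₀ _ hzF.ne'] at hfar
  linarith [hM ⟨AffineMap.lineMap a z ((M + 1) / infDist z F), rfl⟩]

theorem IsCrystallographicGeom.eq_bot_of_normal_of_finite {n : ℕ} {G : Type*} [Group G]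
    (h : IsCrystallographicGeom n G) (N : Subgroup G) [N.Normal] [Finite N] : N = ⊥ := by
  obtain ⟨Γ, ⟨e⟩, -, _⟩ := h
  have : (N.map (e : G →* Γ)).Normal := Subgroup.Normal.map ‹_› _ e.surjective
  have : Finite (N.map (e : G →* Γ)) :=
    Finite.of_equiv _ (N.equivMapOfInjective _ e.injective).toEquiv
  exact (N.map_eq_bot_iff_of_injective (f := (e : G →* Γ)) e.injective).1
    (Subgroup.eq_bot_of_finite_of_compactSpace_quotient _)

end FixedPoints

theorem properlyDiscontinuousSMul_of_finite_setOf_dist_le {X : Type*} [MetricSpace X]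
    (Γ : Subgroup (X ≃ᵢ X)) (x₀ : X)
    (h : ∀ R, {γ : Γ | dist ((γ : X ≃ᵢ X) x₀) x₀ ≤ R}.Finite) : ProperlyDiscontinuousSMul Γ X where
  finite_disjoint_inter_image {K K'} hK hK' := by
    obtain ⟨R, hR⟩ := hK.isBounded.subset_closedBall x₀
    obtain ⟨R', hR'⟩ := hK'.isBounded.subset_closedBall x₀
    refine (h (R + R')).subset fun γ hγ => ?_
    obtain ⟨_, ⟨x, hx, rfl⟩, hxK'⟩ := hγ
    calc dist ((γ : X ≃ᵢ X) x₀) x₀ ≤ dist ((γ : X ≃ᵢ X) x₀) ((γ : X ≃ᵢ X) x) + dist (γ • x) x₀ :=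
          dist_triangle _ _ _
      _ ≤ R + R' := by
          rw [IsometryEquiv.dist_eq, dist_comm]
          exact add_le_add (hR hx) (hR' hxK')

theorem compactSpace_quotient_of_forall_smul_mem {Γ X : Type*} [Group Γ] [MulAction Γ X]
    [TopologicalSpace X] {K : Set X} (hK : IsCompact K) (h : ∀ x, ∃ γ : Γ, γ • x ∈ K) :
    CompactSpace (Quotient (MulAction.orbitRel Γ X)) := by
  refine ⟨?_⟩
  have hsurj : Quotient.mk (MulAction.orbitRel Γ X) '' K = Set.univ :=
    Set.eq_univ_of_forall fun q => q.inductionOn fun x =>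
      let ⟨γ, hγ⟩ := h x
      ⟨γ • x, hγ, Quotient.sound ⟨γ, rfl⟩⟩
  exact hsurj ▸ hK.image continuous_quot_mk

theorem isCrystallographicGeom_of_injective {n : ℕ} {G : Type*} [Group G]
    (Ψ : G →* (EuclideanSpace ℝ (Fin n) ≃ᵢ EuclideanSpace ℝ (Fin n))) (hΨ : Function.Injective Ψ)
    (hfin : ∀ R, {g | dist (Ψ g 0) 0 ≤ R}.Finite) (C : ℝ) (hcov : ∀ x, ∃ g, ‖Ψ g x‖ ≤ C) :
    IsCrystallographicGeom n G := by
  refine ⟨Ψ.range, ⟨MonoidHom.ofInjective hΨ⟩,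
    properlyDiscontinuousSMul_of_finite_setOf_dist_le _ 0 fun R => ?_,
    compactSpace_quotient_of_forall_smul_mem (isCompact_closedBall 0 C) fun x => ?_⟩
  · refine ((hfin R).image Ψ.rangeRestrict).subset ?_
    rintro ⟨_, g, rfl⟩ hg
    exact ⟨g, hg, rfl⟩
  · obtain ⟨g, hg⟩ := hcov x
    exact ⟨Ψ.rangeRestrict g, mem_closedBall_zero_iff.2 hg⟩

theorem Subgroup.finite_of_inf_eq_bot {G : Type*} [Group G] {N L : Subgroup G} [L.FiniteIndex]
    (h : N ⊓ L = ⊥) : Finite N := by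
  refine Finite.of_injective (fun x : N => (x : G ⧸ L)) fun x y hxy => ?_
  have hmem : (x : G)⁻¹ * y ∈ N ⊓ L := ⟨N.mul_mem (N.inv_mem x.2) y.2, QuotientGroup.eq.1 hxy⟩
  rw [h, Subgroup.mem_bot, inv_mul_eq_one] at hmem
  exact Subtype.ext hmem

theorem Subgroup.finite_setOf_dist_le {G X : Type*} [Group G] [MetricSpace X]
    (Ψ : G →* (X ≃ᵢ X)) (L : Subgroup G) [L.FiniteIndex] (x₀ : X)
    (h : ∀ R, {l : L | dist (Ψ l x₀) x₀ ≤ R}.Finite) (R : ℝ) :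
    {g | dist (Ψ g x₀) x₀ ≤ R}.Finite := by
  refine (Set.finite_iUnion fun q : G ⧸ L => ((h (R + dist (Ψ q.out x₀) x₀)).image
    fun l : L => q.out * l)).subset fun g hg => Set.mem_iUnion.2 ⟨g, ?_⟩
  obtain ⟨l, hl⟩ := QuotientGroup.mk_out_eq_mul L g
  refine ⟨l⁻¹, ?_, by simp [hl]⟩
  have hl' : ((l⁻¹ : L) : G) = (g : G ⧸ L).out⁻¹ * g := by simp [hl]
  calc dist (Ψ (l⁻¹ : L) x₀) x₀ = dist (Ψ g x₀) (Ψ (g : G ⧸ L).out x₀) := by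
        rw [hl', map_mul, map_inv, IsometryEquiv.mul_apply, ← (Ψ (g : G ⧸ L).out).dist_eq,
          IsometryEquiv.apply_inv_self]
    _ ≤ R + dist (Ψ (g : G ⧸ L).out x₀) x₀ := by
        rw [dist_comm _ x₀]
        exact (dist_triangle _ x₀ _).trans (add_le_add_left hg _)

theorem isCrystallographicGeom_of_translations {n : ℕ} {G : Type*} [Group G]
    (Ψ : G →* (EuclideanSpace ℝ (Fin n) ≃ᵢ EuclideanSpace ℝ (Fin n))) (L : Subgroup G)
    [L.FiniteIndex] (ψ : L → EuclideanSpace ℝ (Fin n)) (hΨL : ∀ (l : L) x, Ψ l x = x + ψ l)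
    (hψ : ∀ l, ψ l = 0 → l = 1) (hfin : ∀ R, {l | ‖ψ l‖ ≤ R}.Finite) (C : ℝ)
    (hcov : ∀ x, ∃ l, ‖x + ψ l‖ ≤ C) (hG : ∀ N : Subgroup G, N.Normal → Finite N → N = ⊥) :
    IsCrystallographicGeom n G := by
  have hker : Ψ.ker ⊓ L = ⊥ := by
    refine eq_bot_iff.2 fun g ⟨hg, hgL⟩ => Subgroup.mem_bot.2 ?_
    have h0 : ψ ⟨g, hgL⟩ = 0 := by simpa [hΨL ⟨g, hgL⟩] using congr($(MonoidHom.mem_ker.1 hg) 0)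
    exact congrArg Subtype.val (hψ _ h0)
  have hinj : Function.Injective Ψ :=
    Ψ.ker_eq_bot_iff.1 (hG _ Ψ.normal_ker (Subgroup.finite_of_inf_eq_bot hker))
  refine isCrystallographicGeom_of_injective Ψ hinj
    (L.finite_setOf_dist_le Ψ 0 fun R => by simpa [hΨL] using hfin R) C fun x => ?_
  obtain ⟨l, hl⟩ := hcov x
  exact ⟨l, by rwa [hΨL]⟩

section Lattice

variable {ι E : Type*} [Fintype ι] [NormedAddCommGroup E] [NormedSpace ℝ E] (T : (ι → ℝ) ≃ₗ[ℝ] E)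

theorem LinearEquiv.finite_setOf_norm_apply_intCast_le (R : ℝ) :
    {z : ι → ℤ | ‖T (Int.cast ∘ z)‖ ≤ R}.Finite := by
  let T' := T.toContinuousLinearEquiv
  refine ((isCompact_closedBall (0 : ι → ℤ)
    (‖(T'.symm : E →L[ℝ] (ι → ℝ))‖ * R)).finite_of_discrete).subset
      fun z hz => mem_closedBall_zero_iff.2 ?_
  calc ‖z‖ = ‖(Int.cast ∘ z : ι → ℝ)‖ := by
        simp only [Pi.norm_def, Function.comp_apply]; rfl
    _ = ‖T'.symm (T' (Int.cast ∘ z))‖ := by simp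
    _ ≤ _ := (T'.symm : E →L[ℝ] (ι → ℝ)).le_opNorm_of_le hz

theorem LinearEquiv.exists_norm_add_apply_intCast_le :
    ∃ C, ∀ x, ∃ z : ι → ℤ, ‖x + T (Int.cast ∘ z)‖ ≤ C := by
  let T' := T.toContinuousLinearEquiv
  refine ⟨‖(T' : (ι → ℝ) →L[ℝ] E)‖ * 2⁻¹, fun x => ⟨fun i => -round (T'.symm x i), ?_⟩⟩
  have hround : ‖T'.symm x + Int.cast ∘ fun i => -round (T'.symm x i)‖ ≤ 2⁻¹ :=
    (pi_norm_le_iff_of_nonneg (by norm_num)).2 fun i => by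
      simpa [← sub_eq_add_neg, Real.norm_eq_abs, one_div] using abs_sub_round (T'.symm x i)
  calc ‖x + T (Int.cast ∘ fun i => -round (T'.symm x i))‖
      = ‖T' (T'.symm x + Int.cast ∘ fun i => -round (T'.symm x i))‖ := by simp [T']
    _ ≤ _ := (T' : (ι → ℝ) →L[ℝ] E).le_opNorm_of_le hround

end Lattice

section AffineActions

variable {R E : Type*} [Semiring R] [SeminormedAddCommGroup E] [Module R E]

def LinearIsometryEquiv.toLinearMapMonoidHom : (E ≃ₗᵢ[R] E) →* Module.End R E where
  toFun e := e.toLinearEquiv.toLinearMap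
  map_one' := rfl
  map_mul' _ _ := rfl

@[simp]
theorem LinearIsometryEquiv.toLinearMapMonoidHom_apply (e : E ≃ₗᵢ[R] E) (x : E) :
    toLinearMapMonoidHom e x = e x := rfl

variable {G : Type*} [Group G] (A : G →* (E ≃ₗᵢ[R] E)) (t : G → E)
  (ht : ∀ g h, t (g * h) = t g + A g (t h))

def affineIsometryHom : G →* (E ≃ᵢ E) where
  toFun g := (A g).toIsometryEquiv.trans (IsometryEquiv.addRight (t g))
  map_one' := by
    have ht1 : t 1 = 0 := by simpa using ht 1 1
    ext x; simp [ht1]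
  map_mul' g h := by
    ext x
    simp only [ht, map_mul, IsometryEquiv.trans_apply, IsometryEquiv.addRight_apply,
      LinearIsometryEquiv.coe_toIsometryEquiv, LinearIsometryEquiv.coe_mul, Function.comp_apply,
      map_add, IsometryEquiv.mul_apply]
    abel

theorem affineIsometryHom_apply (g : G) (x : E) : affineIsometryHom A t ht g x = A g x + t g :=
  rfl

end AffineActions

theorem QuotientGroup.sum_mul_out_eq_sum_out {G E : Type*} [Group G] [AddCommMonoid E]
    {L : Subgroup G} [L.Normal] [Fintype (G ⧸ L)] {F : G → E} (hF : ∀ x, ∀ l ∈ L, F (x * l) = F x)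
    (h : G) : ∑ q : G ⧸ L, F (h * q.out) = ∑ q : G ⧸ L, F q.out := by
  have hout (x : G) : F (x : G ⧸ L).out = F x := by
    obtain ⟨l, hl⟩ := QuotientGroup.mk_out_eq_mul L x
    rw [hl, hF _ _ l.2]
  refine Fintype.sum_equiv (Equiv.mulLeft (h : G ⧸ L)) _ _ fun q => ?_
  rw [← hout, QuotientGroup.mk_mul, QuotientGroup.out_eq']
  rfl

theorem Subgroup.exists_cocycle_extension {G K E : Type*} [Group G] [DivisionRing K] [CharZero K]
    [AddCommGroup E] [Module K E] {L : Subgroup G} [L.Normal] [L.FiniteIndex]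
    (ρ : G →* Module.End K E) (hρL : L ≤ ρ.ker) (ψ : L →* Multiplicative E)
    (hψ : ∀ g (l : L), ρ g (ψ l).toAdd = (ψ (MulAut.conjNormal g l)).toAdd) :
    ∃ t : G → E, (∀ g h, t (g * h) = t g + ρ g (t h)) ∧ ∀ l : L, t l = (ψ l).toAdd := by
  classical
  have := Fintype.ofFinite (G ⧸ L)
  -- `u` extends `ψ` along the transversal `q ↦ q.out`; the average over `G ⧸ L` of its failure
  -- `c` to be a cocycle is the cocycle we want.
  let r (g : G) : L := ⟨(g : G ⧸ L).out⁻¹ * g, QuotientGroup.eq.mp (QuotientGroup.out_eq' _)⟩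
  let u (g : G) : E := ρ g (ψ (r g)).toAdd
  have hu (g l : G) (hl : l ∈ L) : u (g * l) = u g + ρ g (ψ ⟨l, hl⟩).toAdd := by
    have hr : r (g * l) = r g * ⟨l, hl⟩ := by
      ext; simp [r, QuotientGroup.mk_mul_of_mem g hl, mul_assoc]
    have hρ : ρ (g * l) = ρ g := by rw [map_mul, hρL hl, mul_one]
    simp only [u, hr, map_mul, toAdd_mul, map_add, hρ]
  let c (g x : G) : E := u (g * x) - ρ g (u x)
  have hc (g x l : G) (hl : l ∈ L) : c g (x * l) = c g x := by
    simp only [c, ← mul_assoc, hu _ l hl, map_add, map_mul, Module.End.mul_apply]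
    abel
  have hcocycle (g h x : G) : c (g * h) x = c g (h * x) + ρ g (c h x) := by
    simp only [c, map_sub, map_mul, Module.End.mul_apply, mul_assoc]
    abel
  have hcL (l : L) (x : G) : c l x = (ψ l).toAdd := by
    have hx : (l : G) * x = x * (MulAut.conjNormal x⁻¹ l : G) := by simp [mul_assoc]
    have hconj : MulAut.conjNormal x (MulAut.conjNormal x⁻¹ l) = l := by
      ext; simp
    have hl1 : ρ l = 1 := hρL l.2
    simp only [c, hx, hu x _ (MulAut.conjNormal x⁻¹ l).2, Subtype.coe_eta, hψ, hconj, hl1,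
      Module.End.one_apply, add_sub_cancel_left]
  let t (g : G) : E := (Fintype.card (G ⧸ L) : K)⁻¹ • ∑ q : G ⧸ L, c g q.out
  refine ⟨t, fun g h => ?_, fun l => ?_⟩
  · have hsum := QuotientGroup.sum_mul_out_eq_sum_out (fun x l hl => hc g x l hl) h
    simp only [t, hcocycle, Finset.sum_add_distrib, hsum, ← map_sum, smul_add, map_smul]
  · simp only [t, hcL, Finset.sum_const, Finset.card_univ, ← Nat.cast_smul_eq_nsmul K, smul_smul]
    rw [inv_mul_cancel₀ (Nat.cast_ne_zero.mpr Fintype.card_ne_zero), one_smul]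

section Representation

open scoped MatrixOrder ComplexOrder

theorem Matrix.exists_conj_mem_unitaryGroup {𝕜 ι Q : Type*} [RCLike 𝕜] [Fintype ι] [DecidableEq ι]
    [Group Q] [Finite Q] (ρ : Q →* Matrix ι ι 𝕜) :
    ∃ (w : (Matrix ι ι 𝕜)ˣ) (u : Q →* unitaryGroup ι 𝕜),
      ∀ q, (u q : Matrix ι ι 𝕜) = w * ρ q * (↑w⁻¹ : Matrix ι ι 𝕜) := by
  classical
  have := Fintype.ofFinite Q
  let m : Matrix ι ι 𝕜 := ∑ q : Q, star (ρ q) * ρ q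
  have hm : m.PosDef := by
    rw [show m = _ from (Finset.univ.add_sum_erase _ (Finset.mem_univ 1)).symm, map_one, star_one,
      one_mul]
    exact PosDef.one.add_posSemidef
      (posSemidef_sum _ fun q _ => posSemidef_conjTranspose_mul_self _)
  -- `m` is `ρ`-invariant, so conjugating by `w` with `m = star w * w` makes `ρ` unitary.
  obtain ⟨w, hw, hmw⟩ :=
    CStarAlgebra.isStrictlyPositive_iff_eq_star_mul_self.mp hm.isStrictlyPositive
  lift w to (Matrix ι ι 𝕜)ˣ using hw
  have hinv (q : Q) : star (ρ q) * m * ρ q = m := by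
    simp only [m, Finset.mul_sum, Finset.sum_mul]
    refine Fintype.sum_equiv (Equiv.mulRight q) _ _ fun r => ?_
    simp [mul_assoc, star_mul]
  set W : Matrix ι ι 𝕜 := ↑w
  set W' : Matrix ι ι 𝕜 := ↑w⁻¹
  have h1 : W' * W = 1 := w.inv_mul
  have h2 : W * W' = 1 := w.mul_inv
  have hstar (q : Q) : star (W * ρ q * W') * (W * ρ q * W') = 1 := by
    calc _ = star W' * (star (ρ q) * (star W * W) * ρ q) * W' := by
          simp only [star_mul]; noncomm_ring
      _ = star (W * W') * (W * W') := by rw [← hmw, hinv, hmw, star_mul]; noncomm_ring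
      _ = 1 := by rw [h2, star_one, one_mul]
  refine ⟨w, { toFun q := ⟨W * ρ q * W', mem_unitaryGroup_iff'.2 (hstar q)⟩
               map_one' := ?_
               map_mul' a b := ?_ }, fun q => rfl⟩
  · exact Subtype.ext (by simp [h2])
  · refine Subtype.ext ?_
    calc W * ρ (a * b) * W' = W * ρ a * (W' * W) * ρ b * W' := by rw [h1, map_mul]; noncomm_ring
      _ = (W * ρ a * W') * (W * ρ b * W') := by noncomm_ring

noncomputable def Matrix.unitaryGroupToLinearIsometryEquiv {𝕜 ι : Type*} [RCLike 𝕜] [Fintype ι]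
    [DecidableEq ι] : unitaryGroup ι 𝕜 →* (EuclideanSpace 𝕜 ι ≃ₗᵢ[𝕜] EuclideanSpace 𝕜 ι) :=
  Unitary.linearIsometryEquiv.toMonoidHom.comp
    (Unitary.map (StarMonoidHom.ofClass (toEuclideanCLM (n := ι) (𝕜 := 𝕜)))).toMonoidHom

theorem Matrix.unitaryGroupToLinearIsometryEquiv_apply {𝕜 ι : Type*} [RCLike 𝕜] [Fintype ι]
    [DecidableEq ι] (u : unitaryGroup ι 𝕜) (x : ι → 𝕜) :
    unitaryGroupToLinearIsometryEquiv u (WithLp.toLp 2 x) =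
      WithLp.toLp 2 ((u : Matrix ι ι 𝕜) *ᵥ x) :=
  rfl

theorem Subgroup.exists_intMatrix_conj_representation {G ι : Type*} [Group G] [Fintype ι]
    [DecidableEq ι] (L : Subgroup G) [L.Normal] (f : L ≃* Multiplicative (ι → ℤ)) :
    ∃ ρ : G →* Matrix ι ι ℤ, L ≤ ρ.ker ∧
      ∀ g (l : L), ρ g *ᵥ (f l).toAdd = (f (MulAut.conjNormal g l)).toAdd := by
  let σ (g : G) : (ι → ℤ) →ₗ[ℤ] (ι → ℤ) := (AddMonoidHom.toMultiplicative.symm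
    (f.toMonoidHom.comp ((MulAut.conjNormal g).toMonoidHom.comp f.symm.toMonoidHom))).toIntLinearMap
  have hσ (g : G) (v : ι → ℤ) : σ g v = (f (MulAut.conjNormal g (f.symm (.ofAdd v)))).toAdd := rfl
  have hcomm (a b : L) : a * b = b * a := f.injective (by simp [mul_comm])
  refine ⟨{ toFun g := LinearMap.toMatrix' (σ g), map_one' := ?_, map_mul' g h := ?_ }, ?_, ?_⟩
  · rw [← LinearMap.toMatrix'_id]; congr 1; refine LinearMap.ext fun v => ?_; simp [hσ]
  · rw [← LinearMap.toMatrix'_mul]; congr 1; refine LinearMap.ext fun v => ?_; simp [hσ]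
  · intro l hl
    simp only [MonoidHom.mem_ker, MonoidHom.coe_mk, OneHom.coe_mk]
    rw [← LinearMap.toMatrix'_id]; congr 1; refine LinearMap.ext fun v => ?_
    have : MulAut.conjNormal l (f.symm (.ofAdd v)) = f.symm (.ofAdd v) := by
      ext
      rw [MulAut.conjNormal_apply, show l * _ = _ * l from congrArg Subtype.val (hcomm ⟨l, hl⟩ _),
        mul_inv_cancel_right]
    simp [hσ, this]
  · intro g l
    simp [LinearMap.toMatrix'_mulVec, hσ]

theorem Subgroup.exists_orthogonal_lattice_representation {G ι : Type*} [Group G] [Fintype ι]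
    [DecidableEq ι] (L : Subgroup G) [L.Normal] [L.FiniteIndex] (f : L ≃* Multiplicative (ι → ℤ)) :
    ∃ (A : G →* (EuclideanSpace ℝ ι ≃ₗᵢ[ℝ] EuclideanSpace ℝ ι))
      (T : (ι → ℝ) ≃ₗ[ℝ] EuclideanSpace ℝ ι), L ≤ A.ker ∧
      ∀ g (l : L), A g (T (Int.cast ∘ (f l).toAdd)) =
        T (Int.cast ∘ (f (MulAut.conjNormal g l)).toAdd) := by
  obtain ⟨ρ, hρL, hρ⟩ := L.exists_intMatrix_conj_representation f
  let ρℝ : G →* Matrix ι ι ℝ := (Int.castRingHom ℝ).mapMatrix.toMonoidHom.comp ρ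
  have hρℝL : L ≤ ρℝ.ker := fun l hl => by simp [ρℝ, MonoidHom.mem_ker.1 (hρL hl)]
  obtain ⟨w, u, hu⟩ := exists_conj_mem_unitaryGroup (QuotientGroup.lift L ρℝ hρℝL)
  let T := (GeneralLinearGroup.toLin w).toLinearEquiv.trans (WithLp.linearEquiv 2 ℝ (ι → ℝ)).symm
  have hT (v : ι → ℝ) : T v = WithLp.toLp 2 ((w : Matrix ι ι ℝ) *ᵥ v) := rfl
  refine ⟨unitaryGroupToLinearIsometryEquiv.comp (u.comp (QuotientGroup.mk' L)), T,
    fun l hl => ?_, fun g l => ?_⟩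
  · simp [MonoidHom.mem_ker, (QuotientGroup.eq_one_iff l).2 hl]
  · have hmul : ρℝ g *ᵥ (Int.cast ∘ (f l).toAdd) =
        Int.cast ∘ (f (MulAut.conjNormal g l)).toAdd := by
      ext i
      rw [Function.comp_apply, ← hρ]
      exact ((Int.castRingHom ℝ).map_mulVec _ _ i).symm
    simp only [MonoidHom.comp_apply, QuotientGroup.mk'_apply, hT,
      unitaryGroupToLinearIsometryEquiv_apply, hu, QuotientGroup.lift_mk, mulVec_mulVec, ← hmul]
    rw [mul_assoc _ (↑w⁻¹ : Matrix ι ι ℝ), Units.inv_mul, mul_one]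

end Representation

theorem Subgroup.exists_normal_finiteIndex_mulEquiv {G ι : Type*} [Group G] [Finite ι]
    (N : Subgroup G) [N.FiniteIndex] (e : N ≃* Multiplicative (ι → ℤ)) :
    ∃ L : Subgroup G, L.Normal ∧ L.FiniteIndex ∧ Nonempty (L ≃* Multiplicative (ι → ℤ)) := by
  let e' : N ≃* (ι → Multiplicative ℤ) := e.trans (MulEquiv.funMultiplicative ι ℤ)
  let K := N.normalCore.subgroupOf N
  have hK : (K.map (e' : N →* (ι → Multiplicative ℤ))).index ≠ 0 := by
    rw [index_map_equiv]
    exact FiniteIndex.index_ne_zero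
  obtain ⟨h⟩ := Int.subgroup_index_ne_zero_iff.mp hK
  exact ⟨N.normalCore, inferInstance, inferInstance,
    ⟨(subgroupOfEquivOfLe N.normalCore_le).symm.trans ((K.equivMapOfInjective _ e'.injective).trans
      (h.trans (MulEquiv.funMultiplicative ι ℤ).symm))⟩⟩

theorem isCrystallographicGeom_of_normal_lattice {n : ℕ} {G : Type*} [Group G] (L : Subgroup G)
    [L.Normal] [L.FiniteIndex] (f : L ≃* Multiplicative (Fin n → ℤ))
    (hG : ∀ N : Subgroup G, N.Normal → Finite N → N = ⊥) : IsCrystallographicGeom n G := by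
  obtain ⟨A, T, hAL, hAT⟩ := L.exists_orthogonal_lattice_representation f
  let ψ : L →* Multiplicative (EuclideanSpace ℝ (Fin n)) :=
    (AddMonoidHom.toMultiplicative ((T : (Fin n → ℝ) →+ EuclideanSpace ℝ (Fin n)).comp
      (AddMonoidHom.compLeft (Int.castAddHom ℝ) (Fin n)))).comp f.toMonoidHom
  have hψ (l : L) : (ψ l).toAdd = T (Int.cast ∘ (f l).toAdd) := rfl
  obtain ⟨t, ht, htL⟩ := L.exists_cocycle_extension
    (LinearIsometryEquiv.toLinearMapMonoidHom.comp A)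
    (fun l hl => by simp [MonoidHom.mem_ker.1 (hAL hl)]) ψ (by simpa [hψ] using hAT)
  replace ht : ∀ g h, t (g * h) = t g + A g (t h) := ht
  obtain ⟨C, hC⟩ := T.exists_norm_add_apply_intCast_le
  refine isCrystallographicGeom_of_translations (affineIsometryHom A t ht) L (fun l => (ψ l).toAdd)
    (fun l x => ?_) (fun l hl => ?_) (fun R => ?_) C (fun x => ?_) hG
  · rw [affineIsometryHom_apply, MonoidHom.mem_ker.1 (hAL l.2), htL]
    rfl
  · rw [hψ, LinearEquiv.map_eq_zero_iff] at hl
    have hz : (f l).toAdd = 0 := funext fun i => Int.cast_eq_zero.1 (congrFun hl i)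
    exact f.map_eq_one_iff.1 (toAdd_eq_zero.1 hz)
  · exact (T.finite_setOf_norm_apply_intCast_le R).preimage
      (Multiplicative.toAdd.injective.comp f.injective).injOn
  · obtain ⟨z, hz⟩ := hC x
    exact ⟨f.symm (.ofAdd z), by simpa [hψ] using hz⟩

theorem crystallographic_iff_no_finite_normal_subgroup_general
    (n : ℕ) (G : Type*) [Group G]
    (hvfa : ∃ N : Subgroup G, N.FiniteIndex ∧ Nonempty (N ≃* Multiplicative (Fin n → ℤ))) :
    IsCrystallographicGeom n G ↔
      (∀ N : Subgroup G, N.Normal → Finite N → N = ⊥) := by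
  refine ⟨fun h N _ _ => h.eq_bot_of_normal_of_finite N, fun hG => ?_⟩
  obtain ⟨N, _, ⟨e⟩⟩ := hvfa
  obtain ⟨L, _, _, ⟨f⟩⟩ := N.exists_normal_finiteIndex_mulEquiv e
  exact isCrystallographicGeom_of_normal_lattice L f hG

/-- A virtually free abelian group of rank `n ≥ 1` is isomorphic to an `n`-dimensional
crystallographic group (a discrete cocompact subgroup of the isometry group of `ℝⁿ`) if
and only if it has no nontrivial finite normal subgroup. -/
theorem crystallographic_iff_no_finite_normal_subgroup
    (n : ℕ) (hn : 1 ≤ n) (G : Type*) [Group G]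
    (hvfa : ∃ N : Subgroup G, N.FiniteIndex ∧ Nonempty (N ≃* Multiplicative (Fin n → ℤ))) :
    IsCrystallographicGeom n G ↔
      (∀ N : Subgroup G, N.Normal → Finite N → N = ⊥) :=
  crystallographic_iff_no_finite_normal_subgroup_general n G hvfa
end

section
/- Let G be a finitely generated residually finite group and let ι: G → Ĝ be the canonical homomorphism to its profinite completion. If N is a finite normal subgroup of G, then ι(N) is a normal subgroup of Ĝ. -/
/- Conjugating by a fixed element is continuous and a finite set is closed, so the set of
elements conjugating `ι(m)` into the finite group `ι(N)` is closed; it contains the dense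
image of `G` by normality of `N`, hence all of `Ĝ`. -/

theorem conj_mem_of_mem_closure {H : Type*} [Group H] [TopologicalSpace H] [ContinuousMul H]
    [ContinuousInv H] {F S : Set H} (hF : IsClosed F) {m : H} (hS : ∀ s ∈ S, s * m * s⁻¹ ∈ F)
    {x : H} (hx : x ∈ closure S) : x * m * x⁻¹ ∈ F :=
  closure_minimal hS (hF.preimage (by fun_prop)) hx

theorem MonoidHom.conj_mem_map_of_mem_closure_range {G H : Type*} [Group G] [Group H]
    [TopologicalSpace H] [T1Space H] [IsTopologicalGroup H] (f : G →* H) {N : Subgroup G}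
    (hN : N.Normal) [Finite N] {m : G} (hm : m ∈ N) {x : H} (hx : x ∈ closure (Set.range f)) :
    x * f m * x⁻¹ ∈ N.map f := by
  have hfin : (N.map f : Set H).Finite := (Set.toFinite (N : Set G)).image f
  refine conj_mem_of_mem_closure hfin.isClosed ?_ hx
  rintro _ ⟨g, rfl⟩
  exact ⟨g * m * g⁻¹, hN.conj_mem m hm g, by simp⟩

theorem image_of_finite_normal_subgroup_normal_in_completion_general
    (G : Type*) [Group G]
    (N : Subgroup G) (hN : N.Normal) (hNfin : Finite N) :
    (N.map (profiniteIota G)).Normal := by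
  constructor
  rintro _ ⟨m, hm, rfl⟩ x
  obtain ⟨k, hk, hconj⟩ := (profiniteMap G).conj_mem_map_of_mem_closure_range hN hm x.2
  exact ⟨k, hk, Subtype.ext hconj⟩

/-- If `G` is a finitely generated residually finite group and `N` is a finite normal
subgroup of `G`, then `ι(N)` is a normal subgroup of the profinite completion `Ĝ`. -/
theorem image_of_finite_normal_subgroup_normal_in_completion
    (G : Type*) [Group G] (hGfg : Group.FG G) (hGrf : ResiduallyFinite G)
    (N : Subgroup G) (hN : N.Normal) (hNfin : Finite N) :
    (N.map (profiniteIota G)).Normal :=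
  image_of_finite_normal_subgroup_normal_in_completion_general G N hN hNfin
end

section
/- Let Ĝ be a profinite group containing an open (finite-index closed) normal subgroup N isomorphic as a topological group to ẐⁿΩ (the profinite completion of ℤⁿ, a torsion-free profinite abelian group), such that Ĝ has no nontrivial finite normal subgroup and the abelianization of Ĝ is finite. Then the centre of Ĝ is trivial. -/
/-!
A central element `z` of `Ĝ` commutes with everything, so the transfer `Ĝ → N ≅ Ẑⁿ` sends it to
`z ^ [Ĝ : N]`. The transfer factors through the finite abelianization, so this power is torsion
in `Ẑⁿ`; but `Ẑⁿ` is torsion-free (an element killed by `k` is trivial modulo every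
finite-index `K`, by testing it against the finite-index subgroup `Kᵏ`), hence `z ^ [Ĝ : N] = 1`.
The centre is then a torsion group whose cyclic subgroups are normal and finite, so it is trivial.
-/

open Subgroup

section TorsionFree

lemma ProfiniteCompletion.exists_mk_eq_apply_pair {G : Type*} [Group G]
    (t : ProfiniteCompletion G) (K L : NormalFiniteIndexSubgroup G) :
    ∃ g : G, (g : G ⧸ K.val) = t.val K ∧ (g : G ⧸ L.val) = t.val L := by
  have hopen : IsOpen ((fun x : ProfiniteAmbient G ↦ x K) ⁻¹' {t.val K} ∩
      (fun x : ProfiniteAmbient G ↦ x L) ⁻¹' {t.val L}) :=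
    ((continuous_apply K).isOpen_preimage _ (isOpen_discrete _)).inter
      ((continuous_apply L).isOpen_preimage _ (isOpen_discrete _))
  obtain ⟨_, ⟨hK, hL⟩, g, rfl⟩ := mem_closure_iff.mp t.2 _ hopen ⟨rfl, rfl⟩
  exact ⟨g, hK, hL⟩

variable {G : Type*} [CommGroup G] [Group.FG G]

lemma Subgroup.finiteIndex_map_powMonoidHom (K : Subgroup G) [K.FiniteIndex] {k : ℕ}
    (hk : k ≠ 0) : (K.map (powMonoidHom k)).FiniteIndex := by
  suffices Finite (G ⧸ K.map (powMonoidHom k)) from finiteIndex_of_finite_quotient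
  refine CommGroup.finite_of_fg_isMulTorsion _ fun x ↦ isOfFinOrder_iff_pow_eq_one.mpr
    ⟨K.index * k, Nat.mul_pos (Nat.pos_of_ne_zero FiniteIndex.index_ne_zero)
      (Nat.pos_of_ne_zero hk), ?_⟩
  induction x using QuotientGroup.induction_on with
  | H g =>
    rw [← QuotientGroup.mk_pow, QuotientGroup.eq_one_iff, pow_mul]
    exact ⟨g ^ K.index, K.pow_index_mem g, rfl⟩

instance ProfiniteCompletion.instIsMulTorsionFree [IsMulTorsionFree G] :
    IsMulTorsionFree (ProfiniteCompletion G) := by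
  refine isMulTorsionFree_iff_not_isOfFinOrder.mpr fun t ht htors ↦ ht ?_
  obtain ⟨k, hk, htk⟩ := isOfFinOrder_iff_pow_eq_one.mp htors
  refine Subtype.ext (funext fun K ↦ ?_)
  change t.val K = 1
  have := K.val.finiteIndex_map_powMonoidHom hk.ne'
  let Kk : NormalFiniteIndexSubgroup G := ⟨K.val.map (powMonoidHom k), inferInstance, this⟩
  obtain ⟨g, hgK, hgKk⟩ := ProfiniteCompletion.exists_mk_eq_apply_pair t K Kk
  have hgk : g ^ k ∈ Kk.val := by
    rw [← QuotientGroup.eq_one_iff, QuotientGroup.mk_pow, hgKk]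
    exact congrFun (congrArg Subtype.val htk) Kk
  obtain ⟨h, hK, hhg⟩ := hgk
  have hgh : g = h := pow_left_injective hk.ne' hhg.symm
  rw [← hgK, QuotientGroup.eq_one_iff, hgh]
  exact hK

end TorsionFree

section Centre

variable {G : Type*} [Group G]

lemma MonoidHom.pow_natCard_abelianization_eq_one [Finite (Abelianization G)] {A : Type*}
    [CommGroup A] (f : G →* A) (g : G) : f g ^ Nat.card (Abelianization G) = 1 := by
  rw [← Abelianization.lift_apply_of, ← map_pow, pow_card_eq_one', map_one]

lemma isOfFinOrder_of_mem_center [Finite (Abelianization G)] (H : Subgroup G) [H.FiniteIndex]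
    {A : Type*} [CommGroup A] [IsMulTorsionFree A] (ϕ : H →* A) (hϕ : Function.Injective ϕ)
    {z : G} (hz : z ∈ center G) : IsOfFinOrder z := by
  have hcomm : ∀ (k : ℕ) (g₀ : G), g₀⁻¹ * z ^ k * g₀ ∈ H → g₀⁻¹ * z ^ k * g₀ = z ^ k :=
    fun k g₀ _ ↦ by rw [mul_assoc, ← mem_center_iff.mp (pow_mem hz k) g₀, inv_mul_cancel_left]
  have htransfer := (ϕ.transfer).pow_natCard_abelianization_eq_one z
  rw [ϕ.transfer_eq_pow z hcomm, pow_eq_one_iff_left Nat.card_pos.ne', ← map_one ϕ] at htransfer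
  exact isOfFinOrder_iff_pow_eq_one.mpr ⟨H.index, Nat.pos_of_ne_zero FiniteIndex.index_ne_zero,
    congrArg Subtype.val (hϕ htransfer)⟩

lemma NoFiniteNormalSubgroup.eq_one_of_mem_center (h : NoFiniteNormalSubgroup G) {z : G}
    (hz : z ∈ center G) (hfin : IsOfFinOrder z) : z = 1 := by
  have hnormal : (zpowers z).Normal := ⟨fun _ hx g ↦ by
    rwa [mem_center_iff.mp (zpowers_le.mpr hz hx) g, mul_inv_cancel_right]⟩
  have hbot := h (zpowers z) hnormal hfin.finite_zpowers
  simpa [hbot] using mem_zpowers z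

end Centre

theorem centre_trivial_of_profinite_virtually_Zhat_general
    (Ghat : Type*) [Group Ghat] [TopologicalSpace Ghat] [IsTopologicalGroup Ghat]
    [CompactSpace Ghat]
    (n : ℕ) (N : Subgroup Ghat) (hNopen : IsOpen (N : Set Ghat))
    (hNiso : ∃ e : N ≃* ProfiniteCompletion (Multiplicative (Fin n → ℤ)),
      Continuous e ∧ Continuous e.symm)
    (hnofin : NoFiniteNormalSubgroup Ghat)
    (habfin : Finite (Abelianization Ghat)) :
    Subgroup.center Ghat = ⊥ := by
  obtain ⟨e, -⟩ := hNiso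
  have : Finite (Ghat ⧸ N) := N.quotient_finite_of_isOpen hNopen
  have : N.FiniteIndex := finiteIndex_of_finite_quotient
  exact eq_bot_iff.mpr fun z hz ↦
    hnofin.eq_one_of_mem_center hz (isOfFinOrder_of_mem_center N e.toMonoidHom e.injective hz)

/-- Let `Ĝ` be a profinite group with an open normal subgroup `N` isomorphic as a
topological group to `Ẑⁿ` (the profinite completion of `ℤⁿ`). If `Ĝ` has no nontrivial
finite normal subgroup and the abelianization of `Ĝ` is finite, then the centre of `Ĝ`
is trivial. -/
theorem centre_trivial_of_profinite_virtually_Zhat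
    (Ghat : Type*) [Group Ghat] [TopologicalSpace Ghat] [IsTopologicalGroup Ghat]
    [CompactSpace Ghat] [T2Space Ghat] [TotallyDisconnectedSpace Ghat]
    (n : ℕ) (N : Subgroup Ghat) (hN : N.Normal) (hNopen : IsOpen (N : Set Ghat))
    (hNiso : ∃ e : N ≃* ProfiniteCompletion (Multiplicative (Fin n → ℤ)),
      Continuous e ∧ Continuous e.symm)
    (hnofin : NoFiniteNormalSubgroup Ghat)
    (habfin : Finite (Abelianization Ghat)) :
    Subgroup.center Ghat = ⊥ :=
  centre_trivial_of_profinite_virtually_Zhat_general Ghat n N hNopen hNiso hnofin habfin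
end
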